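/- arXiv:2204.08356 — 5 statements merged into one kernel-verified Lean document; each statement's English description precedes it below -/
import Mathlib

section
/- Let (N_g)_{g≥1} be i.i.d. random variables with P(N_g ≥ 1) = 1 and E[N_g^2] < ∞. Then max_{1≤g≤G} N_g^2 / Σ_{1≤g≤G} N_g converges to 0 in probability as G → ∞. -/
open MeasureTheory ProbabilityTheory Filter Topology

/-- For i.i.d. cluster sizes `N_g ≥ 1` a.s. with finite second moment,
`max_{1≤g≤G} N_g^2 / Σ_{1≤g≤G} N_g → 0` in probability as `G → ∞`. -/
theorem stmt1 {Ω : Type*} [MeasurableSpace Ω] (μ : Measure Ω) [IsProbabilityMeasure μ]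
    (N : ℕ → Ω → ℝ)
    (hmeas : ∀ g, Measurable (N g))
    (hindep : iIndepFun N μ)
    (hident : ∀ g, IdentDistrib (N g) (N 0) μ μ)
    (hpos : ∀ g, ∀ᵐ ω ∂μ, 1 ≤ N g ω)
    (hL2 : MemLp (N 0) 2 μ) :
    TendstoInMeasure μ
      (fun G ω =>
        ((Finset.range (G + 1)).sup' Finset.nonempty_range_add_one (fun g => (N g ω) ^ 2)) /
          (∑ g ∈ Finset.range (G + 1), N g ω))
      atTop (fun _ => (0 : ℝ)) := by
  rw [tendstoInMeasure_iff_dist]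
  intro ε hε
  set X : Ω → ℝ := fun ω => (N 0 ω) ^ 2 with hXdef
  have hXmeas : Measurable X := (hmeas 0).pow_const 2
  have hXint : Integrable X μ := hL2.integrable_sq
  have hfin : (∫⁻ ω, ENNReal.ofReal (X ω) ∂μ) ≠ ⊤ :=
    ne_of_lt (lt_of_le_of_lt (lintegral_ofReal_le_lintegral_enorm X)
      hXint.hasFiniteIntegral)
  set s : ℕ → Set Ω := fun G => {ω | ε * (G + 1) ≤ X ω} with hsdef
  have hsmeas : ∀ G, MeasurableSet (s G) := fun G => hXmeas measurableSet_Ici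
  have hanti : Antitone s := by
    intro a b hab ω hω
    simp only [hsdef, Set.mem_setOf_eq] at hω ⊢
    have h1 : (a : ℝ) + 1 ≤ (b : ℝ) + 1 := by exact_mod_cast Nat.succ_le_succ hab
    nlinarith [hε.le, hω]
  have hμs : Tendsto (fun G => μ (s G)) atTop (𝓝 0) := by
    have h := tendsto_measure_iInter_atTop (μ := μ)
      (fun G => (hsmeas G).nullMeasurableSet) hanti ⟨0, measure_ne_top μ _⟩
    have hempty : (⋂ G, s G) = ∅ := by
      ext ω
      simp only [Set.mem_iInter, Set.mem_empty_iff_false, iff_false, not_forall]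
      obtain ⟨G, hG⟩ := exists_nat_gt (X ω / ε)
      refine ⟨G, ?_⟩
      simp only [hsdef, Set.mem_setOf_eq, not_le]
      have h2 : X ω / ε < (G : ℝ) + 1 := by linarith
      have h3 : X ω = (X ω / ε) * ε := by field_simp
      nlinarith
    rw [hempty] at h
    rw [measure_empty] at h
    exact h
  have hL : Tendsto (fun G => ∫⁻ ω in s G, ENNReal.ofReal (X ω) ∂μ) atTop (𝓝 0) :=
    tendsto_setLIntegral_zero hfin hμs
  have hεne : ENNReal.ofReal ε ≠ 0 := by simp [hε, ENNReal.ofReal_pos.mpr hε]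
  have hbound : ∀ G, μ {ω | ε ≤ dist
      (((Finset.range (G + 1)).sup' Finset.nonempty_range_add_one (fun g => (N g ω) ^ 2)) /
        (∑ g ∈ Finset.range (G + 1), N g ω)) 0}
      ≤ (ENNReal.ofReal ε)⁻¹ * ∫⁻ ω in s G, ENNReal.ofReal (X ω) ∂μ := by
    intro G
    have step1 : μ {ω | ε ≤ dist
        (((Finset.range (G + 1)).sup' Finset.nonempty_range_add_one (fun g => (N g ω) ^ 2)) /
          (∑ g ∈ Finset.range (G + 1), N g ω)) 0}
        ≤ μ (⋃ g ∈ Finset.range (G + 1), {ω | ε * (G + 1) ≤ (N g ω) ^ 2}) := by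
      apply measure_mono_ae
      have hA : ∀ᵐ ω ∂μ, ∀ g, 1 ≤ N g ω := ae_all_iff.mpr hpos
      filter_upwards [hA] with ω hω hmem
      set M := (Finset.range (G + 1)).sup' Finset.nonempty_range_add_one
        (fun g => (N g ω) ^ 2) with hMdef
      set S := ∑ g ∈ Finset.range (G + 1), N g ω with hSdef
      have hsum : (G : ℝ) + 1 ≤ S := by
        calc (G : ℝ) + 1 = ∑ _g ∈ Finset.range (G + 1), (1 : ℝ) := by
              rw [Finset.sum_const, Finset.card_range, nsmul_eq_mul, mul_one]
              push_cast; ring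
          _ ≤ S := Finset.sum_le_sum (fun g _ => hω g)
      have hSpos : 0 < S := by
        have hG0 : (0:ℝ) ≤ (G:ℝ) := Nat.cast_nonneg G
        linarith
      have hM0 : (N 0 ω) ^ 2 ≤ M :=
        Finset.le_sup' (fun g => (N g ω) ^ 2) (Finset.mem_range.mpr (Nat.succ_pos G))
      have hMnn : 0 ≤ M := le_trans (sq_nonneg _) hM0
      have hmem' : ε ≤ dist (M / S) 0 := hmem
      rw [Real.dist_0_eq_abs, abs_of_nonneg (div_nonneg hMnn hSpos.le)] at hmem'
      have hεM : ε * ((G : ℝ) + 1) ≤ M := by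
        have h1 : ε * S ≤ M := (le_div_iff₀ hSpos).mp hmem'
        nlinarith
      obtain ⟨g, hg, hgM⟩ := Finset.exists_mem_eq_sup'
        (Finset.nonempty_range_add_one (n := G)) (fun g => (N g ω) ^ 2)
      show ω ∈ ⋃ g ∈ Finset.range (G + 1), {ω | ε * (G + 1) ≤ (N g ω) ^ 2}
      refine Set.mem_biUnion hg ?_
      rw [Set.mem_setOf_eq, ← hgM]
      exact hεM
    have step3 : ∀ g, μ {ω | ε * (G + 1) ≤ (N g ω) ^ 2} = μ (s G) := by
      intro g
      have hid : IdentDistrib (fun ω => (N g ω) ^ 2) X μ μ :=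
        (hident g).comp (measurable_id.pow_const 2)
      have h := hid.measure_mem_eq (measurableSet_Ici (a := ε * ((G : ℝ) + 1)))
      simpa [Set.preimage, Set.mem_Ici, hsdef] using h
    have step2 : μ (⋃ g ∈ Finset.range (G + 1), {ω | ε * (G + 1) ≤ (N g ω) ^ 2})
        ≤ ((G : ENNReal) + 1) * μ (s G) := by
      refine le_trans (measure_biUnion_finset_le _ _) ?_
      rw [Finset.sum_congr rfl (fun g _ => step3 g), Finset.sum_const, Finset.card_range,
        nsmul_eq_mul]
      push_cast
      exact le_rfl
    have markov : ENNReal.ofReal (ε * ((G : ℝ) + 1)) * μ (s G)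
        ≤ ∫⁻ ω in s G, ENNReal.ofReal (X ω) ∂μ := by
      calc ENNReal.ofReal (ε * ((G : ℝ) + 1)) * μ (s G)
          = ∫⁻ _ω in s G, ENNReal.ofReal (ε * ((G : ℝ) + 1)) ∂μ := by
            rw [setLIntegral_const]
        _ ≤ ∫⁻ ω in s G, ENNReal.ofReal (X ω) ∂μ :=
            setLIntegral_mono' (hsmeas G) (fun ω hω => ENNReal.ofReal_le_ofReal hω)
    have hsplit : ((G : ENNReal) + 1) * μ (s G)
        = (ENNReal.ofReal ε)⁻¹ * (ENNReal.ofReal (ε * ((G : ℝ) + 1)) * μ (s G)) := by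
      have hcast : ENNReal.ofReal ((G : ℝ) + 1) = (G : ENNReal) + 1 := by
        rw [ENNReal.ofReal_add (by positivity) (by norm_num), ENNReal.ofReal_natCast,
          ENNReal.ofReal_one]
      rw [ENNReal.ofReal_mul hε.le, hcast, ← mul_assoc, ← mul_assoc,
        ENNReal.inv_mul_cancel hεne ENNReal.ofReal_ne_top, one_mul]
    refine le_trans (step1.trans step2) ?_
    rw [hsplit]
    exact mul_le_mul_right markov _
  have hlim : Tendsto (fun G => (ENNReal.ofReal ε)⁻¹ *
      ∫⁻ ω in s G, ENNReal.ofReal (X ω) ∂μ) atTop (𝓝 0) := by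
    have hne : (ENNReal.ofReal ε)⁻¹ ≠ ⊤ := by simp [hεne]
    have := ENNReal.Tendsto.const_mul (a := (ENNReal.ofReal ε)⁻¹) hL (Or.inr hne)
    simpa using this
  exact tendsto_of_tendsto_of_tendsto_of_le_of_le tendsto_const_nhds hlim
    (fun G => zero_le) hbound
end

section
/- Define Δ_g := (1/N_g)Σ_{i=1}^{N_g} E[Y_{i,g}(1) - Y_{i,g}(0) | N_g]. If cluster sizes are ignorable in the sense that E[Y_{i,g}(1)-Y_{i,g}(0) | N_g] = E[Y_{i,g}(1)-Y_{i,g}(0)] almost surely for all i ≤ N_g, and additionally E[Y_{i,g}(1)-Y_{i,g}(0)] = E[Y_{j,g}(1)-Y_{j,g}(0)] for all i, j ≤ N_g almost surely (homogeneity), then θ1 = θ2. -/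
open MeasureTheory

/-- If cluster sizes are ignorable (E[D_i | N] = E[D_i] a.s. for all i < N) and
treatment effects are homogeneous across individuals (E[D_i] = E[D_j] for i, j < N),
then θ1 = θ2. -/
theorem stmt7 {Ω : Type*} [MeasurableSpace Ω] (μ : Measure Ω) [IsProbabilityMeasure μ]
    (N : Ω → ℕ) (hN : Measurable N) (hN1 : ∀ᵐ ω ∂μ, 1 ≤ N ω)
    (hNint : Integrable (fun ω => (N ω : ℝ)) μ)
    (D : ℕ → Ω → ℝ) (hDint : ∀ i, Integrable (D i) μ)
    (hsumint : Integrable (fun ω => ∑ i ∈ Finset.range (N ω), D i ω) μ)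
    (havgint : Integrable (fun ω => (∑ i ∈ Finset.range (N ω), D i ω) / (N ω : ℝ)) μ)
    (hig : ∀ i, ∀ᵐ ω ∂μ, i < N ω →
      (μ[D i | MeasurableSpace.comap N inferInstance]) ω = ∫ x, D i x ∂μ)
    (hhom : ∀ i j, ∀ᵐ ω ∂μ, i < N ω → j < N ω → ∫ x, D i x ∂μ = ∫ x, D j x ∂μ) :
    ∫ ω, (∑ i ∈ Finset.range (N ω), D i ω) / (N ω : ℝ) ∂μ
      = (∫ ω, ∑ i ∈ Finset.range (N ω), D i ω ∂μ) / (∫ ω, (N ω : ℝ) ∂μ) := by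
  classical
  have hmle : MeasurableSpace.comap N (inferInstance : MeasurableSpace ℕ)
      ≤ (inferInstance : MeasurableSpace Ω) := hN.comap_le
  set c : ℝ := ∫ x, D 0 x ∂μ with hc
  set s : ℕ → Set Ω := fun n => N ⁻¹' {n} with hs
  have hsmeas : ∀ n, MeasurableSet (s n) := fun n => hN (measurableSet_singleton n)
  have hsmeas' : ∀ n, MeasurableSet[MeasurableSpace.comap N
      (inferInstance : MeasurableSpace ℕ)] (s n) :=
    fun n => ⟨{n}, measurableSet_singleton n, rfl⟩
  have hsdisj : Pairwise (Function.onFun Disjoint s) := by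
    intro i j hij
    simp only [Function.onFun, Set.disjoint_left]
    intro ω h1 h2
    exact hij ((Set.mem_preimage.mp h1).symm.trans (Set.mem_preimage.mp h2))
  have hsunion : (⋃ n, s n) = Set.univ := by
    ext ω; simp [hs]
  have hs0 : μ (s 0) = 0 := by
    refine measure_mono_null ?_ (ae_iff.mp hN1)
    intro ω hω
    have : N ω = 0 := hω
    simp [this]
  -- key: for i < n, ∫ in s n of D i = c * μ (s n)
  have key : ∀ n, ∀ i < n, ∫ ω in s n, D i ω ∂μ = c * (μ (s n)).toReal := by
    intro n i hin
    by_cases h0 : μ (s n) = 0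
    · rw [Measure.restrict_eq_zero.mpr h0, integral_zero_measure, h0]
      simp
    · have hci : ∫ x, D i x ∂μ = c := by
        have hfreq : ∃ᵐ ω ∂μ, ω ∈ s n := by
          rw [MeasureTheory.frequently_ae_mem_iff]
          exact h0
        have := hfreq.and_eventually (hhom i 0)
        obtain ⟨ω, hω1, hω2⟩ := this.exists
        have hNω : N ω = n := hω1
        exact hω2 (by omega) (by omega)
      calc ∫ ω in s n, D i ω ∂μ
          = ∫ ω in s n, (μ[D i | MeasurableSpace.comap N
              (inferInstance : MeasurableSpace ℕ)]) ω ∂μ :=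
            (setIntegral_condExp hmle (hDint i) (hsmeas' n)).symm
        _ = ∫ ω in s n, c ∂μ := by
            apply setIntegral_congr_ae (hsmeas n)
            filter_upwards [hig i] with ω hω hmem
            have hNω : N ω = n := hmem
            rw [hω (by omega), hci]
        _ = c * (μ (s n)).toReal := by
            rw [setIntegral_const, smul_eq_mul, mul_comm]; rfl
  have sum_n : ∀ n, ∫ ω in s n, (∑ i ∈ Finset.range (N ω), D i ω) ∂μ
      = (n : ℝ) * (c * (μ (s n)).toReal) := by
    intro n
    have h1 : ∫ ω in s n, (∑ i ∈ Finset.range (N ω), D i ω) ∂μ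
        = ∫ ω in s n, (∑ i ∈ Finset.range n, D i ω) ∂μ := by
      apply setIntegral_congr_fun (hsmeas n)
      intro ω hω
      have : N ω = n := hω
      simp [this]
    rw [h1, integral_finset_sum _ (fun i _ => (hDint i).integrableOn)]
    have : ∀ i ∈ Finset.range n, ∫ ω in s n, D i ω ∂μ = c * (μ (s n)).toReal := by
      intro i hi
      exact key n i (Finset.mem_range.mp hi)
    rw [Finset.sum_congr rfl this, Finset.sum_const, Finset.card_range, nsmul_eq_mul]
  have avg_n : ∀ n, ∫ ω in s n, (∑ i ∈ Finset.range (N ω), D i ω) / (N ω : ℝ) ∂μ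
      = c * (μ (s n)).toReal := by
    intro n
    rcases Nat.eq_zero_or_pos n with rfl | hn
    · rw [Measure.restrict_eq_zero.mpr hs0, integral_zero_measure, hs0]
      simp
    · have h1 : ∫ ω in s n, (∑ i ∈ Finset.range (N ω), D i ω) / (N ω : ℝ) ∂μ
          = ∫ ω in s n, (∑ i ∈ Finset.range n, D i ω) / (n : ℝ) ∂μ := by
        apply setIntegral_congr_fun (hsmeas n)
        intro ω hω
        have : N ω = n := hω
        simp [this]
      rw [h1, integral_div]
      have h2 : ∫ ω in s n, (∑ i ∈ Finset.range n, D i ω) ∂μ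
          = (n : ℝ) * (c * (μ (s n)).toReal) := by
        have := sum_n n
        rwa [show (∫ ω in s n, (∑ i ∈ Finset.range (N ω), D i ω) ∂μ)
            = ∫ ω in s n, (∑ i ∈ Finset.range n, D i ω) ∂μ from by
          apply setIntegral_congr_fun (hsmeas n)
          intro ω hω
          have : N ω = n := hω
          simp [this]] at this
      rw [h2]
      field_simp
  have N_n : ∀ n, ∫ ω in s n, (N ω : ℝ) ∂μ = (n : ℝ) * (μ (s n)).toReal := by
    intro n
    have h1 : ∫ ω in s n, (N ω : ℝ) ∂μ = ∫ ω in s n, (n : ℝ) ∂μ := by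
      apply setIntegral_congr_fun (hsmeas n)
      intro ω hω
      have : N ω = n := hω
      simp [this]
    rw [h1, setIntegral_const, smul_eq_mul, mul_comm]; rfl
  -- decompose integrals over the partition
  have decomp : ∀ (f : Ω → ℝ), Integrable f μ →
      ∫ ω, f ω ∂μ = ∑' n, ∫ ω in s n, f ω ∂μ := by
    intro f hf
    rw [← integral_iUnion hsmeas hsdisj (hsunion ▸ hf.integrableOn), hsunion, setIntegral_univ]
  have htsum_meas : ∑' n, (μ (s n)).toReal = 1 := by
    rw [← ENNReal.tsum_toReal_eq (fun n => measure_ne_top μ (s n)),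
      ← measure_iUnion hsdisj hsmeas, hsunion, measure_univ, ENNReal.toReal_one]
  have havg : ∫ ω, (∑ i ∈ Finset.range (N ω), D i ω) / (N ω : ℝ) ∂μ = c := by
    rw [decomp _ havgint]
    calc ∑' n, ∫ ω in s n, (∑ i ∈ Finset.range (N ω), D i ω) / (N ω : ℝ) ∂μ
        = ∑' n, c * (μ (s n)).toReal := by
          exact tsum_congr avg_n
      _ = c * ∑' n, (μ (s n)).toReal := tsum_mul_left
      _ = c := by rw [htsum_meas, mul_one]
  have hsum : ∫ ω, (∑ i ∈ Finset.range (N ω), D i ω) ∂μ = c * ∫ ω, (N ω : ℝ) ∂μ := by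
    rw [decomp _ hsumint, decomp _ hNint]
    calc ∑' n, ∫ ω in s n, (∑ i ∈ Finset.range (N ω), D i ω) ∂μ
        = ∑' n : ℕ, c * ((n : ℝ) * (μ (s n)).toReal) := by
          refine tsum_congr fun n => ?_
          rw [sum_n n]; ring
      _ = c * ∑' n : ℕ, (n : ℝ) * (μ (s n)).toReal := tsum_mul_left
      _ = c * ∑' n, ∫ ω in s n, (N ω : ℝ) ∂μ := by
          congr 1
          exact (tsum_congr N_n).symm
  have hTpos : (0 : ℝ) < ∫ ω, (N ω : ℝ) ∂μ := by
    have h1 : (1 : ℝ) = ∫ _ω, (1 : ℝ) ∂μ := by simp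
    have h2 : ∫ _ω, (1 : ℝ) ∂μ ≤ ∫ ω, (N ω : ℝ) ∂μ := by
      apply integral_mono_ae (integrable_const 1) hNint
      filter_upwards [hN1] with ω hω
      exact_mod_cast hω
    linarith
  rw [havg, hsum, mul_div_assoc, div_self (ne_of_gt hTpos), mul_one]
end

section
/- Suppose the number of sampled units per cluster is a deterministic constant: P(|M_g| = k) = 1 for some k ≥ 1, and suppose the conditional expectation of the average treatment effect over the sampled subset equals the full-cluster average treatment effect given N_g (extrapolation assumption). Then the sample-weighted estimand ϑ = E[Σ_{i∈M_g}(Y_{i,g}(1)-Y_{i,g}(0))]/E[|M_g|] equals the equally-weighted estimand θ1. -/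
open MeasureTheory

/-- If the number of sampled units per cluster is a.s. a constant `k ≥ 1` and the
extrapolation assumption holds, then the sample-weighted estimand ϑ equals the
equally-weighted estimand θ1. -/
theorem stmt8 {Ω : Type*} [MeasurableSpace Ω] (μ : Measure Ω) [IsProbabilityMeasure μ]
    (N : Ω → ℕ) (hN : Measurable N)
    (M : Ω → Finset ℕ) (D : ℕ → Ω → ℝ) (k : ℕ) (hk : 1 ≤ k)
    (hcard : ∀ᵐ ω ∂μ, (M ω).card = k)
    (hsub : ∀ᵐ ω ∂μ, M ω ⊆ Finset.range (N ω))
    (hintS : Integrable (fun ω => ∑ i ∈ M ω, D i ω) μ)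
    (hintSa : Integrable (fun ω => (∑ i ∈ M ω, D i ω) / ((M ω).card : ℝ)) μ)
    (hintF : Integrable (fun ω => (∑ i ∈ Finset.range (N ω), D i ω) / (N ω : ℝ)) μ)
    (hext :
      (μ[(fun ω => (∑ i ∈ M ω, D i ω) / ((M ω).card : ℝ)) |
          MeasurableSpace.comap N inferInstance])
        =ᵐ[μ]
      (μ[(fun ω => (∑ i ∈ Finset.range (N ω), D i ω) / (N ω : ℝ)) |
          MeasurableSpace.comap N inferInstance])) :
    (∫ ω, ∑ i ∈ M ω, D i ω ∂μ) / (∫ ω, ((M ω).card : ℝ) ∂μ)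
      = ∫ ω, (∑ i ∈ Finset.range (N ω), D i ω) / (N ω : ℝ) ∂μ := by
  have hk0 : (k : ℝ) ≠ 0 := by positivity
  have hm : MeasurableSpace.comap N inferInstance ≤ (inferInstance : MeasurableSpace Ω) :=
    hN.comap_le
  have h1 : ∫ ω, (∑ i ∈ M ω, D i ω) / ((M ω).card : ℝ) ∂μ
      = ∫ ω, (∑ i ∈ Finset.range (N ω), D i ω) / (N ω : ℝ) ∂μ := by
    rw [← integral_condExp (f := fun ω => (∑ i ∈ M ω, D i ω) / ((M ω).card : ℝ)) hm,
      ← integral_condExp (f := fun ω => (∑ i ∈ Finset.range (N ω), D i ω) / (N ω : ℝ)) hm]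
    exact integral_congr_ae hext
  have hcardInt : ∫ ω, ((M ω).card : ℝ) ∂μ = (k : ℝ) := by
    rw [integral_congr_ae (g := fun _ => (k : ℝ))
      (hcard.mono fun ω h => by simp [h])]
    simp
  have hS : ∫ ω, ∑ i ∈ M ω, D i ω ∂μ
      = (k : ℝ) * ∫ ω, (∑ i ∈ M ω, D i ω) / ((M ω).card : ℝ) ∂μ := by
    rw [← integral_const_mul]
    refine integral_congr_ae (hcard.mono fun ω h => ?_)
    simp only [h]
    field_simp
  rw [hS, hcardInt, h1]
  field_simp
end

section
/- Suppose the sampled-subset size is a constant fraction of the cluster size: P(|M_g| = γ N_g) = 1 for some 0 < γ ≤ 1, and the extrapolation assumption holds (conditional on N_g, the average effect over the sampled subset equals the full-cluster average effect in expectation). Then the sample-weighted estimand ϑ = E[Σ_{i∈M_g}(Y_{i,g}(1)-Y_{i,g}(0))]/E[|M_g|] equals the size-weighted estimand θ2 = E[Σ_{i=1}^{N_g}(Y_{i,g}(1)-Y_{i,g}(0))]/E[N_g]. -/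
open MeasureTheory

/-- If the sampled-subset size is a.s. a constant fraction `γ ∈ (0,1]` of the cluster size
and the extrapolation assumption holds, then the sample-weighted estimand ϑ equals the
size-weighted estimand θ2. -/
theorem stmt9 {Ω : Type*} [MeasurableSpace Ω] (μ : Measure Ω) [IsProbabilityMeasure μ]
    (N : Ω → ℕ) (hN : Measurable N) (hN1 : ∀ᵐ ω ∂μ, 1 ≤ N ω)
    (hNint : Integrable (fun ω => (N ω : ℝ)) μ)
    (M : Ω → Finset ℕ) (D : ℕ → Ω → ℝ) (γ : ℝ) (hγ0 : 0 < γ) (hγ1 : γ ≤ 1)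
    (hcard : ∀ᵐ ω ∂μ, ((M ω).card : ℝ) = γ * (N ω : ℝ))
    (hsub : ∀ᵐ ω ∂μ, M ω ⊆ Finset.range (N ω))
    (hintS : Integrable (fun ω => ∑ i ∈ M ω, D i ω) μ)
    (hintSa : Integrable (fun ω => (∑ i ∈ M ω, D i ω) / ((M ω).card : ℝ)) μ)
    (hintF : Integrable (fun ω => ∑ i ∈ Finset.range (N ω), D i ω) μ)
    (hintFa : Integrable (fun ω => (∑ i ∈ Finset.range (N ω), D i ω) / (N ω : ℝ)) μ)
    (hext :
      (μ[(fun ω => (∑ i ∈ M ω, D i ω) / ((M ω).card : ℝ)) |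
          MeasurableSpace.comap N inferInstance])
        =ᵐ[μ]
      (μ[(fun ω => (∑ i ∈ Finset.range (N ω), D i ω) / (N ω : ℝ)) |
          MeasurableSpace.comap N inferInstance])) :
    (∫ ω, ∑ i ∈ M ω, D i ω ∂μ) / (∫ ω, ((M ω).card : ℝ) ∂μ)
      = (∫ ω, ∑ i ∈ Finset.range (N ω), D i ω ∂μ) / (∫ ω, (N ω : ℝ) ∂μ) := by
  have hm := hN.comap_le
  set m : MeasurableSpace Ω := MeasurableSpace.comap N inferInstance with hm_def
  set f : Ω → ℝ := fun ω => (∑ i ∈ M ω, D i ω) / ((M ω).card : ℝ) with hf_def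
  set g : Ω → ℝ := fun ω => (∑ i ∈ Finset.range (N ω), D i ω) / (N ω : ℝ) with hg_def
  set Nr : Ω → ℝ := fun ω => (N ω : ℝ) with hNr_def
  have hNm : Measurable[m] N := Measurable.of_comap_le le_rfl
  have hNrm : StronglyMeasurable[m] Nr :=
    ((measurable_from_top (f := (Nat.cast : ℕ → ℝ))).comp hNm).stronglyMeasurable
  -- a.e. identities
  have hNe : ∀ᵐ ω ∂μ, (Nr ω) ≠ 0 := by
    filter_upwards [hN1] with ω hω
    simp only [hNr_def, ne_eq, Nat.cast_eq_zero]
    omega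
  have h1 : (fun ω => Nr ω * f ω) =ᵐ[μ] (fun ω => γ⁻¹ * ∑ i ∈ M ω, D i ω) := by
    filter_upwards [hcard, hNe] with ω hc hne
    simp only [hf_def, hc]
    field_simp
    simp only [hNr_def] at hne ⊢; field_simp
  have h2 : (fun ω => Nr ω * g ω) =ᵐ[μ] (fun ω => ∑ i ∈ Finset.range (N ω), D i ω) := by
    filter_upwards [hNe] with ω hne
    simp only [hg_def]
    field_simp
    simp only [hNr_def] at hne ⊢; field_simp
  have hintNf : Integrable (fun ω => Nr ω * f ω) μ :=
    (hintS.const_mul γ⁻¹).congr h1.symm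
  have hintNg : Integrable (fun ω => Nr ω * g ω) μ := hintF.congr h2.symm
  haveI : SigmaFinite (μ.trim hm) := by
    have : IsFiniteMeasure (μ.trim hm) := isFiniteMeasure_trim hm
    infer_instance
  -- pull-out property
  have hpf : μ[Nr * f|m] =ᵐ[μ] Nr * μ[f|m] :=
    condExp_mul_of_stronglyMeasurable_left hNrm hintNf hintSa
  have hpg : μ[Nr * g|m] =ᵐ[μ] Nr * μ[g|m] :=
    condExp_mul_of_stronglyMeasurable_left hNrm hintNg hintFa
  have key : ∫ ω, Nr ω * f ω ∂μ = ∫ ω, Nr ω * g ω ∂μ := by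
    show ∫ ω, (Nr * f) ω ∂μ = ∫ ω, (Nr * g) ω ∂μ
    rw [← integral_condExp hm (f := Nr * f), ← integral_condExp hm (f := Nr * g)]
    refine integral_congr_ae ?_
    calc μ[Nr * f|m] =ᵐ[μ] Nr * μ[f|m] := hpf
      _ =ᵐ[μ] Nr * μ[g|m] := by
          filter_upwards [hext] with ω hω
          simp [hω]
      _ =ᵐ[μ] μ[Nr * g|m] := hpg.symm
  have hnum1 : ∫ ω, ∑ i ∈ M ω, D i ω ∂μ = γ * ∫ ω, Nr ω * f ω ∂μ := by
    rw [integral_congr_ae h1, integral_const_mul]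
    rw [← mul_assoc, mul_inv_cancel₀ hγ0.ne', one_mul]
  have hnum2 : ∫ ω, ∑ i ∈ Finset.range (N ω), D i ω ∂μ = ∫ ω, Nr ω * g ω ∂μ :=
    (integral_congr_ae h2).symm
  have hden : ∫ ω, ((M ω).card : ℝ) ∂μ = γ * ∫ ω, Nr ω ∂μ := by
    rw [integral_congr_ae hcard, integral_const_mul]
  rw [hnum1, hnum2, hden, key]
  rw [mul_div_mul_left _ _ hγ0.ne']
end

section
/- Let S take values in a finite set 𝒮 with P(S = s) > 0 for all s, let π ∈ (0,1), let τ : 𝒮 → [0, π(1-π)], and let m_1, m_0 : 𝒮 → ℝ. Define σ² := (1/π)v_1 + (1/(1-π))v_0 + E[(m_1(S) - m_0(S))²] + E[τ(S)((1/π)m_1(S) + (1/(1-π))m_0(S))²], where v_a := Var(X_a - E[X_a|S]) for square-integrable random variables X_a with m_a(S) = E[X_a|S] - E[X_a]. Define σ̃² := (1/π)Var(X_1) + (1/(1-π))Var(X_0). Then σ̃² ≥ σ², with equality if and only if (π(1-π) - τ(s))((1/π)m_1(s) + (1/(1-π))m_0(s))² = 0 for every s ∈ 𝒮. -/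
open MeasureTheory ProbabilityTheory

lemma totalVar {Ω : Type*} {inst : MeasurableSpace Ω} (μ : Measure Ω) [IsProbabilityMeasure μ]
    {m : MeasurableSpace Ω} (hm : m ≤ inst)
    (X : Ω → ℝ) (hX : MemLp X 2 μ) (hY : MemLp (μ[X|m]) 2 μ) :
    variance X μ = variance (fun ω => X ω - (μ[X|m]) ω) μ
      + ∫ ω, ((μ[X|m]) ω - ∫ x, X x ∂μ) ^ 2 ∂μ := by
  have hXi : Integrable X μ := hX.integrable one_le_two
  set Y := μ[X|m] with hYdef
  set c := ∫ x, X x ∂μ with hc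
  have hYi : Integrable Y μ := integrable_condExp
  have hEY : ∫ ω, Y ω ∂μ = c := integral_condExp hm
  set D := fun ω => X ω - Y ω with hD
  set Z := fun ω => Y ω - c with hZ
  have hDm : MemLp D 2 μ := hX.sub hY
  have hZm : MemLp Z 2 μ := hY.sub (memLp_const c)
  have hED : ∫ ω, D ω ∂μ = 0 := by
    have : ∫ ω, D ω ∂μ = (∫ ω, X ω ∂μ) - ∫ ω, Y ω ∂μ := integral_sub hXi hYi
    rw [this, hEY, ← hc, sub_self]
  have hD2 : Integrable (fun ω => D ω ^ 2) μ := hDm.integrable_sq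
  have hZ2 : Integrable (fun ω => Z ω ^ 2) μ := hZm.integrable_sq
  have hDZsum : Integrable (fun ω => (D ω + Z ω) ^ 2) μ := (hDm.add hZm).integrable_sq
  have hZD : Integrable (fun ω => Z ω * D ω) μ := by
    have h := (((hDZsum.sub hD2).sub hZ2)).const_mul (1/2 : ℝ)
    exact h.congr (Filter.Eventually.of_forall fun ω => by simp only [Pi.sub_apply]; ring)
  have hZD' : Integrable (Z * D) μ := hZD
  have h2 : μ[Y|m] = Y := condExp_of_stronglyMeasurable hm stronglyMeasurable_condExp hYi
  have hcondD : μ[D|m] =ᵐ[μ] 0 := by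
    have h1 : μ[D|m] =ᵐ[μ] μ[X|m] - μ[Y|m] := condExp_sub hXi hYi m
    filter_upwards [h1] with ω hω
    rw [hω]
    simp [h2, ← hYdef]
  have hZsm : StronglyMeasurable[m] Z :=
    stronglyMeasurable_condExp.sub stronglyMeasurable_const
  have hcond : μ[Z * D|m] =ᵐ[μ] Z * μ[D|m] :=
    condExp_mul_of_stronglyMeasurable_left hZsm hZD' (hDm.integrable one_le_two)
  have hintZD : ∫ ω, Z ω * D ω ∂μ = 0 := by
    have h0 : μ[Z * D|m] =ᵐ[μ] 0 := by
      filter_upwards [hcond, hcondD] with ω h1 h2'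
      simp [h1, Pi.mul_apply, h2']
    have heq : ∫ ω, (Z * D) ω ∂μ = ∫ ω, (μ[Z * D|m]) ω ∂μ := (integral_condExp hm).symm
    calc ∫ ω, Z ω * D ω ∂μ = ∫ ω, (μ[Z * D|m]) ω ∂μ := heq
      _ = ∫ ω, (0 : Ω → ℝ) ω ∂μ := integral_congr_ae h0
      _ = 0 := by simp
  have hvX : variance X μ = ∫ ω, (X ω - c) ^ 2 ∂μ := variance_eq_integral hX.aemeasurable
  have hvD : variance D μ = ∫ ω, D ω ^ 2 ∂μ := by
    have h : (μ[D] : ℝ) = 0 := hED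
    exact variance_of_integral_eq_zero hDm.aemeasurable h
  have h2ZD : Integrable (fun ω => 2 * (Z ω * D ω)) μ := hZD.const_mul 2
  calc variance X μ = ∫ ω, (X ω - c) ^ 2 ∂μ := hvX
    _ = ∫ ω, (D ω ^ 2 + (2 * (Z ω * D ω) + Z ω ^ 2)) ∂μ :=
        integral_congr_ae (Filter.Eventually.of_forall fun ω => by
          show (X ω - c) ^ 2 = (X ω - Y ω) ^ 2 + (2 * ((Y ω - c) * (X ω - Y ω)) + (Y ω - c) ^ 2)
          ring)
    _ = (∫ ω, D ω ^ 2 ∂μ) + ∫ ω, (2 * (Z ω * D ω) + Z ω ^ 2) ∂μ :=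
        integral_add hD2 (h2ZD.add hZ2)
    _ = (∫ ω, D ω ^ 2 ∂μ) + ((∫ ω, 2 * (Z ω * D ω) ∂μ) + ∫ ω, Z ω ^ 2 ∂μ) := by
        rw [integral_add h2ZD hZ2]
    _ = variance D μ + ∫ ω, Z ω ^ 2 ∂μ := by
        rw [integral_const_mul, hintZD, hvD]; ring

/-- The key variance comparison behind Theorems 3.3 and 3.6: the limit of the robust
variance estimator σ̃² is at least the true asymptotic variance σ², with equality iff
(π(1-π) - τ(s))((1/π)m₁(s) + (1/(1-π))m₀(s))² = 0 for every stratum s. -/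
theorem stmt11 {Ω ι : Type*} [MeasurableSpace Ω] [MeasurableSpace ι] [Fintype ι]
    (μ : Measure Ω) [IsProbabilityMeasure μ]
    (S : Ω → ι) (hS : Measurable S)
    (π : ℝ) (hπ : π ∈ Set.Ioo (0 : ℝ) 1)
    (τ m1 m0 : ι → ℝ) (hτ : ∀ s, τ s ∈ Set.Icc 0 (π * (1 - π)))
    (hp : ∀ s : ι, μ {ω | S ω = s} ≠ 0)
    (X1 X0 : Ω → ℝ) (hX1 : MemLp X1 2 μ) (hX0 : MemLp X0 2 μ)
    (hm1 : ∀ᵐ ω ∂μ,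
      m1 (S ω) = (μ[X1 | MeasurableSpace.comap S inferInstance]) ω - ∫ x, X1 x ∂μ)
    (hm0 : ∀ᵐ ω ∂μ,
      m0 (S ω) = (μ[X0 | MeasurableSpace.comap S inferInstance]) ω - ∫ x, X0 x ∂μ)
    (v1 v0 σ2 σt2 : ℝ)
    (hv1 : v1 = variance
      (fun ω => X1 ω - (μ[X1 | MeasurableSpace.comap S inferInstance]) ω) μ)
    (hv0 : v0 = variance
      (fun ω => X0 ω - (μ[X0 | MeasurableSpace.comap S inferInstance]) ω) μ)
    (hσ2 : σ2 = (1 / π) * v1 + (1 / (1 - π)) * v0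
        + (∫ ω, (m1 (S ω) - m0 (S ω)) ^ 2 ∂μ)
        + (∫ ω, τ (S ω) * ((1 / π) * m1 (S ω) + (1 / (1 - π)) * m0 (S ω)) ^ 2 ∂μ))
    (hσt2 : σt2 = (1 / π) * variance X1 μ + (1 / (1 - π)) * variance X0 μ) :
    σ2 ≤ σt2
    ∧ (σt2 = σ2 ↔
        ∀ s, (π * (1 - π) - τ s) * ((1 / π) * m1 s + (1 / (1 - π)) * m0 s) ^ 2 = 0) := by
  obtain ⟨hπ0, hπ1⟩ := hπ
  have h1πpos : 0 < 1 - π := by linarith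
  have hcpos : 0 < π * (1 - π) := mul_pos hπ0 h1πpos
  set mS := MeasurableSpace.comap S inferInstance with hmSdef
  have hm : mS ≤ _ := hS.comap_le
  set M1 : Ω → ℝ := fun ω => m1 (S ω) with hM1def
  set M0 : Ω → ℝ := fun ω => m0 (S ω) with hM0def
  set Y1 := μ[X1|mS] with hY1def
  set Y0 := μ[X0|mS] with hY0def
  set c1 := ∫ x, X1 x ∂μ with hc1
  set c0 := ∫ x, X0 x ∂μ with hc0
  have hm1' : M1 =ᵐ[μ] fun ω => Y1 ω - c1 := hm1
  have hm0' : M0 =ᵐ[μ] fun ω => Y0 ω - c0 := hm0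
  -- M1, M0 are bounded and a.e. strongly measurable, hence MemLp 2
  have hB1 : ∀ ω, ‖M1 ω‖ ≤ ∑ s, ‖m1 s‖ := fun ω =>
    Finset.single_le_sum (f := fun s => ‖m1 s‖) (fun i _ => norm_nonneg _) (Finset.mem_univ (S ω))
  have hB0 : ∀ ω, ‖M0 ω‖ ≤ ∑ s, ‖m0 s‖ := fun ω =>
    Finset.single_le_sum (f := fun s => ‖m0 s‖) (fun i _ => norm_nonneg _) (Finset.mem_univ (S ω))
  have hY1sm' : StronglyMeasurable[mS] Y1 := stronglyMeasurable_condExp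
  have hY0sm' : StronglyMeasurable[mS] Y0 := stronglyMeasurable_condExp
  have hsub1 : AEStronglyMeasurable (fun ω => Y1 ω - c1) μ :=
    (((hY1sm').sub stronglyMeasurable_const)).aestronglyMeasurable
  have hsub0 : AEStronglyMeasurable (fun ω => Y0 ω - c0) μ :=
    (((hY0sm').sub stronglyMeasurable_const)).aestronglyMeasurable
  have hM1sm : AEStronglyMeasurable M1 μ := hsub1.congr hm1'.symm
  have hM0sm : AEStronglyMeasurable M0 μ := hsub0.congr hm0'.symm
  have hM1 : MemLp M1 2 μ := MemLp.of_bound (hM1sm.mono hm) _ (Filter.Eventually.of_forall hB1)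
  have hM0 : MemLp M0 2 μ := MemLp.of_bound (hM0sm.mono hm) _ (Filter.Eventually.of_forall hB0)
  have hY1m : MemLp Y1 2 μ := by
    refine (hM1.add (memLp_const c1)).ae_eq ?_
    filter_upwards [hm1'] with ω h
    show M1 ω + c1 = Y1 ω
    rw [h]; ring
  have hY0m : MemLp Y0 2 μ := by
    refine (hM0.add (memLp_const c0)).ae_eq ?_
    filter_upwards [hm0'] with ω h
    show M0 ω + c0 = Y0 ω
    rw [h]; ring
  have htv1 : variance X1 μ = variance (fun ω => X1 ω - Y1 ω) μ + ∫ ω, (Y1 ω - c1) ^ 2 ∂μ :=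
    totalVar μ hm X1 hX1 hY1m
  have htv0 : variance X0 μ = variance (fun ω => X0 ω - Y0 ω) μ + ∫ ω, (Y0 ω - c0) ^ 2 ∂μ :=
    totalVar μ hm X0 hX0 hY0m
  have hI1 : ∫ ω, (Y1 ω - c1) ^ 2 ∂μ = ∫ ω, M1 ω ^ 2 ∂μ :=
    integral_congr_ae (by filter_upwards [hm1'] with ω h; rw [h])
  have hI0 : ∫ ω, (Y0 ω - c0) ^ 2 ∂μ = ∫ ω, M0 ω ^ 2 ∂μ :=
    integral_congr_ae (by filter_upwards [hm0'] with ω h; rw [h])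
  set H : Ω → ℝ := fun ω => (1 / π) * M1 ω + (1 / (1 - π)) * M0 ω with hHdef
  have hHm : MemLp H 2 μ := (hM1.const_mul (1 / π)).add (hM0.const_mul (1 / (1 - π)))
  have hH2 : Integrable (fun ω => H ω ^ 2) μ := hHm.integrable_sq
  have hM1sq : Integrable (fun ω => M1 ω ^ 2) μ := hM1.integrable_sq
  have hM0sq : Integrable (fun ω => M0 ω ^ 2) μ := hM0.integrable_sq
  have hsub2 : Integrable (fun ω => (M1 ω - M0 ω) ^ 2) μ := (hM1.sub hM0).integrable_sq
  set Q := ∫ ω, H ω ^ 2 ∂μ with hQ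
  have hQ0 : 0 ≤ Q := integral_nonneg fun ω => sq_nonneg _
  have key : (1 / π) * (∫ ω, M1 ω ^ 2 ∂μ) + (1 / (1 - π)) * (∫ ω, M0 ω ^ 2 ∂μ)
      - (∫ ω, (M1 ω - M0 ω) ^ 2 ∂μ) = (π * (1 - π)) * Q := by
    have hpt : ∀ ω, (1 / π) * M1 ω ^ 2 + (1 / (1 - π)) * M0 ω ^ 2 - (M1 ω - M0 ω) ^ 2
        = (π * (1 - π)) * H ω ^ 2 := by
      intro ω
      show (1 / π) * M1 ω ^ 2 + (1 / (1 - π)) * M0 ω ^ 2 - (M1 ω - M0 ω) ^ 2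
        = (π * (1 - π)) * ((1 / π) * M1 ω + (1 / (1 - π)) * M0 ω) ^ 2
      field_simp
      ring
    calc (1 / π) * (∫ ω, M1 ω ^ 2 ∂μ) + (1 / (1 - π)) * (∫ ω, M0 ω ^ 2 ∂μ)
          - (∫ ω, (M1 ω - M0 ω) ^ 2 ∂μ)
        = ∫ ω, ((1 / π) * M1 ω ^ 2 + (1 / (1 - π)) * M0 ω ^ 2 - (M1 ω - M0 ω) ^ 2) ∂μ := by
          have hc1' : Integrable (fun ω => (1 / π) * M1 ω ^ 2) μ := hM1sq.const_mul _
          have hc0' : Integrable (fun ω => (1 / (1 - π)) * M0 ω ^ 2) μ := hM0sq.const_mul _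
          have ha : Integrable (fun ω => (1 / π) * M1 ω ^ 2 + (1 / (1 - π)) * M0 ω ^ 2) μ :=
            hc1'.add hc0'
          rw [integral_sub ha hsub2, integral_add hc1' hc0',
            integral_const_mul, integral_const_mul]
      _ = ∫ ω, (π * (1 - π)) * H ω ^ 2 ∂μ := integral_congr_ae (Filter.Eventually.of_forall hpt)
      _ = (π * (1 - π)) * Q := integral_const_mul _ _
  set A := ∫ ω, (M1 ω - M0 ω) ^ 2 ∂μ with hA
  set T := ∫ ω, τ (S ω) * H ω ^ 2 ∂μ with hT
  have hσ2' : σ2 = (1 / π) * v1 + (1 / (1 - π)) * v0 + A + T := hσ2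
  have e1 : σt2 = (1 / π) * v1 + (1 / (1 - π)) * v0
      + ((1 / π) * (∫ ω, M1 ω ^ 2 ∂μ) + (1 / (1 - π)) * (∫ ω, M0 ω ^ 2 ∂μ)) := by
    rw [hσt2, htv1, hI1, htv0, hI0, ← hv1, ← hv0]; ring
  have hfinal : σt2 = σ2 + ((π * (1 - π)) * Q - T) := by
    rw [hσ2', e1]; linarith [key]
  have hτle : ∀ ω, τ (S ω) * H ω ^ 2 ≤ (π * (1 - π)) * H ω ^ 2 := fun ω =>
    mul_le_mul_of_nonneg_right (hτ (S ω)).2 (sq_nonneg _)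
  have hTle : T ≤ (π * (1 - π)) * Q := by
    by_cases hint : Integrable (fun ω => τ (S ω) * H ω ^ 2) μ
    · calc T ≤ ∫ ω, (π * (1 - π)) * H ω ^ 2 ∂μ := integral_mono hint (hH2.const_mul _) hτle
        _ = (π * (1 - π)) * Q := integral_const_mul _ _
    · rw [hT, integral_undef hint]
      exact mul_nonneg hcpos.le hQ0
  have hzero : ∀ (f : ι → ℝ), (∀ᵐ ω ∂μ, f (S ω) = 0) → ∀ s, f s = 0 := by
    intro f hf s
    by_contra hne
    have hsub : {ω | S ω = s} ⊆ {ω | ¬ f (S ω) = 0} := fun ω hω => by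
      simp only [Set.mem_setOf_eq] at hω ⊢
      rw [hω]; exact hne
    exact hp s (measure_mono_null hsub (ae_iff.mp hf))
  refine ⟨by linarith [hfinal, hTle], ?_, ?_⟩
  · -- equality implies condition
    intro heq
    have hTQ : T = (π * (1 - π)) * Q := by linarith [hfinal]
    by_cases hint : Integrable (fun ω => τ (S ω) * H ω ^ 2) μ
    · have hcH : Integrable (fun ω => (π * (1 - π)) * H ω ^ 2) μ := hH2.const_mul _
      have hdiff : ∫ ω, ((π * (1 - π)) * H ω ^ 2 - τ (S ω) * H ω ^ 2) ∂μ = 0 := by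
        rw [integral_sub hcH hint, integral_const_mul, ← hT]
        linarith [hTQ]
      have hnn : 0 ≤ᵐ[μ] fun ω => (π * (1 - π)) * H ω ^ 2 - τ (S ω) * H ω ^ 2 :=
        Filter.Eventually.of_forall fun ω => sub_nonneg.2 (hτle ω)
      have hae : (fun ω => (π * (1 - π)) * H ω ^ 2 - τ (S ω) * H ω ^ 2) =ᵐ[μ] 0 :=
        (integral_eq_zero_iff_of_nonneg_ae hnn (hcH.sub hint)).mp hdiff
      refine hzero (fun s => (π * (1 - π) - τ s) * ((1 / π) * m1 s + (1 / (1 - π)) * m0 s) ^ 2) ?_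
      filter_upwards [hae] with ω h
      have h' : (π * (1 - π)) * H ω ^ 2 - τ (S ω) * H ω ^ 2 = 0 := h
      show (π * (1 - π) - τ (S ω)) * H ω ^ 2 = 0
      linear_combination h'
    · have hT0 : T = 0 := by rw [hT]; exact integral_undef hint
      have hQzero : Q = 0 := by
        have h0 : (π * (1 - π)) * Q = 0 := by linarith [hTQ]
        exact (mul_eq_zero.mp h0).resolve_left (ne_of_gt hcpos)
      have hHae : (fun ω => H ω ^ 2) =ᵐ[μ] 0 :=
        (integral_eq_zero_iff_of_nonneg_ae (Filter.Eventually.of_forall fun ω => sq_nonneg _)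
          hH2).mp (by rw [← hQ]; exact hQzero)
      have hg : ∀ s, (1 / π) * m1 s + (1 / (1 - π)) * m0 s = 0 := by
        refine hzero (fun s => (1 / π) * m1 s + (1 / (1 - π)) * m0 s) ?_
        filter_upwards [hHae] with ω h
        have h' : H ω ^ 2 = 0 := h
        show H ω = 0
        exact pow_eq_zero_iff two_ne_zero |>.mp h'
      intro s
      rw [hg s]
      ring
  · -- condition implies equality
    intro hcond
    have hTeq : T = (π * (1 - π)) * Q := by
      have hpt : ∀ ω, τ (S ω) * H ω ^ 2 = (π * (1 - π)) * H ω ^ 2 := fun ω => by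
        have h' : (π * (1 - π) - τ (S ω)) * H ω ^ 2 = 0 := hcond (S ω)
        linear_combination -h'
      rw [hT]
      calc ∫ ω, τ (S ω) * H ω ^ 2 ∂μ = ∫ ω, (π * (1 - π)) * H ω ^ 2 ∂μ :=
            integral_congr_ae (Filter.Eventually.of_forall hpt)
        _ = (π * (1 - π)) * Q := integral_const_mul _ _
    linarith [hfinal, hTeq]
end
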